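/- For integers m ≥ 0 and n ≥ m+2 and any real x, one has N_{n-1,m}(x) − N_{n,m}(x) = ((n−m−1)/n) · Σ_{k=0}^{m+1} C(n,k)·C(m,k−1)·x^k. -/

import Mathlib

/-!
Compare the two polynomials coefficientwise, with `n = p + 1`. Pascal's rule collapses the
difference of the coefficients of `x^(j+1)` to `C(p,j+1) C(m,j) - C(p,j) C(m,j+1)`, and the
absorption identities `(p+1) C(p,j) = (j+1) C(p+1,j+1)` and `(j+1) C(m,j+1) = (m-j) C(m,j)`
turn this into `(p-m)/(p+1) · C(p+1,j+1) C(m,j)`.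
-/

/-- The generalized Narayana polynomial `N_{n,m}(x)`, with the convention
`C(m, k-1) = 0` when `k = 0`. -/
noncomputable def genNarayana (n m : ℕ) (x : ℝ) : ℝ :=
  ∑ k ∈ Finset.range (n + 1),
    (((n.choose k : ℝ) * (m.choose k : ℝ)) -
      (if k = 0 then 0 else (n.choose (k + 1) : ℝ) * (m.choose (k - 1) : ℝ))) * x ^ k

open Finset

noncomputable def genNarayanaCoeff (n m k : ℕ) : ℝ :=
  (n.choose k : ℝ) * m.choose k -
    if k = 0 then 0 else (n.choose (k + 1) : ℝ) * m.choose (k - 1)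

theorem genNarayanaCoeff_eq_zero_of_lt {n m k : ℕ} (hk : n < k) : genNarayanaCoeff n m k = 0 := by
  simp [genNarayanaCoeff, Nat.choose_eq_zero_of_lt hk,
    Nat.choose_eq_zero_of_lt (hk.trans k.lt_succ_self)]

theorem genNarayana_eq_sum_range_of_le {n N : ℕ} (hN : n + 1 ≤ N) (m : ℕ) (x : ℝ) :
    genNarayana n m x = ∑ k ∈ range N, genNarayanaCoeff n m k * x ^ k := by
  calc genNarayana n m x = ∑ k ∈ range (n + 1), genNarayanaCoeff n m k * x ^ k := rfl
    _ = _ := (eventually_constant_sum (fun k hk => by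
      rw [genNarayanaCoeff_eq_zero_of_lt hk, zero_mul]) hN).symm

theorem cast_choose_succ_mul {R : Type*} [Ring R] (m j : ℕ) :
    (m.choose (j + 1) : R) * (j + 1) = m.choose j * (m - j) := by
  rcases le_or_gt j m with hj | hj
  · exact_mod_cast congrArg (Nat.cast : ℕ → R) (Nat.choose_succ_right_eq m j)
  · simp [Nat.choose_eq_zero_of_lt hj, Nat.choose_eq_zero_of_lt (hj.trans j.lt_succ_self)]

theorem genNarayanaCoeff_sub_succ (p m j : ℕ) :
    genNarayanaCoeff p m (j + 1) - genNarayanaCoeff (p + 1) m (j + 1) =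
      (p.choose (j + 1) : ℝ) * m.choose j - p.choose j * m.choose (j + 1) := by
  simp only [genNarayanaCoeff, Nat.add_sub_cancel, if_neg j.succ_ne_zero,
    Nat.choose_succ_succ', Nat.cast_add]
  ring

theorem genNarayanaCoeff_sub_succ_eq {n : ℕ} (hn : n ≠ 0) (m j : ℕ) :
    genNarayanaCoeff (n - 1) m (j + 1) - genNarayanaCoeff n m (j + 1) =
      ((n : ℝ) - m - 1) / n * ((n.choose (j + 1) : ℝ) * m.choose j) := by
  obtain ⟨p, rfl⟩ := Nat.exists_eq_succ_of_ne_zero hn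
  rw [Nat.succ_sub_one, genNarayanaCoeff_sub_succ]
  have hpascal : ((p + 1).choose (j + 1) : ℝ) = p.choose j + p.choose (j + 1) := by
    exact_mod_cast Nat.choose_succ_succ' p j
  have habsorb : ((p : ℝ) + 1) * p.choose j = (p + 1).choose (j + 1) * (j + 1) := by
    exact_mod_cast Nat.add_one_mul_choose_eq p j
  have hm := cast_choose_succ_mul (R := ℝ) m j
  field_simp
  push_cast
  linear_combination (-((p : ℝ) + 1) * m.choose j) * hpascal
    - (m.choose j + m.choose (j + 1) : ℝ) * habsorb - ((p + 1).choose (j + 1) : ℝ) * hm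

theorem genNarayana_difference_formula_general (m n : ℕ) (x : ℝ) :
    genNarayana (n - 1) m x - genNarayana n m x =
      (((n : ℝ) - m - 1) / n) *
        ∑ k ∈ Finset.range (m + 2),
          (n.choose k : ℝ) *
            (if k = 0 then 0 else (m.choose (k - 1) : ℝ)) * x ^ k := by
  rcases eq_or_ne n 0 with rfl | hn
  · simp -- both sides vanish; the right one through the junk value `_ / 0 = 0`
  have hN : m + 2 ≤ n + m + 2 := by omega
  rw [genNarayana_eq_sum_range_of_le (N := n + m + 2) (by omega),
    genNarayana_eq_sum_range_of_le (N := n + m + 2) (by omega),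
    ← eventually_constant_sum (fun k hk => ?_) hN, ← sum_sub_distrib, mul_sum]
  · refine sum_congr rfl fun k _ => ?_
    rcases k with _ | j
    · simp [genNarayanaCoeff]
    · rw [← sub_mul, genNarayanaCoeff_sub_succ_eq hn, if_neg j.succ_ne_zero,
        Nat.add_sub_cancel]
      ring
  · rw [if_neg (by omega), Nat.choose_eq_zero_of_lt (by omega : m < k - 1)]
    simp

theorem genNarayana_difference_formula (m n : ℕ) (h : m + 2 ≤ n) (x : ℝ) :
    genNarayana (n - 1) m x - genNarayana n m x =
      (((n : ℝ) - m - 1) / n) *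
        ∑ k ∈ Finset.range (m + 2),
          (n.choose k : ℝ) *
            (if k = 0 then 0 else (m.choose (k - 1) : ℝ)) * x ^ k :=
  genNarayana_difference_formula_general m n x
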